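/- Greedy diversity is optimal stepwise: with the and-or explanation tree T for p w.r.t. Π and X, define R_0 = ∅ and iteratively let K_i be an explanation tree maximizing Δ_D(R_{i-1}, RVertices(K_i)) = |RVertices(K_i) \ R_{i-1}|, setting R_i = R_{i-1} ∪ RVertices(K_i). Then at each iteration i, the explanation extracted by selecting for each atom vertex a child of maximum W_{T,R_{i-1}}-weight (where atom vertices take max of children, rule vertices take sum of children plus 1 if not in R_{i-1}, plus 0 otherwise) achieves the maximum possible distance Δ_D(R_{i-1}, ·) among all explanation trees in T. -/

import Mathlib

/-- A ground normal rule: head atom, positive body atoms, negative body atoms. -/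
structure Rule (α : Type) where
  head : α
  pos : Finset α
  neg : Finset α

/-- Finite rose trees with vertex labels in `L`; a vertex of a tree is identified
with the subtree hanging from it. -/
inductive RTree (L : Type) : Type
  | node : L → List (RTree L) → RTree L

namespace RTree

def label {L : Type} : RTree L → L
  | node l _ => l

def children {L : Type} : RTree L → List (RTree L)
  | node _ cs => cs

/-- The list of all vertices (subtree occurrences) of a tree. -/
def occs {L : Type} : RTree L → List (RTree L)
  | node l cs => node l cs :: (cs.attach.map (fun c => occs c.1)).flatten
decreasing_by
  have := List.sizeOf_lt_of_mem c.2
  simp only [RTree.node.sizeOf_spec]; omega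

end RTree

/-- Rule `r` supports atom `p` using atoms in `X` but not in `Z`:
`H(r) = p`, `B⁺(r) ⊆ X \ Z` and `B⁻(r) ∩ X = ∅`. -/
def Supports {α : Type} (X Z : Set α) (r : Rule α) (p : α) : Prop :=
  r.head = p ∧ ↑r.pos ⊆ X \ Z ∧ ∀ a ∈ r.neg, a ∉ X

/-- `IsAOTNode P X Z t`: `t` is (a node of) the and-or explanation tree w.r.t.
program `P` and answer set `X`, where `Z` is the set of atoms labeling the
ancestor atom vertices.  An atom vertex labeled `p` has one rule-vertex child for
each rule of `P` supporting `p` using atoms in `X` but not in `insert p Z` (and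
only such children), and has at least one child (so that every leaf is a rule
vertex); a rule vertex labeled `r` has one atom-vertex child for each atom of
`B⁺(r)` (and only such children). -/
inductive IsAOTNode {α : Type} (P : Set (Rule α)) (X : Set α) :
    Set α → RTree (α ⊕ Rule α) → Prop
  | atom {Z : Set α} {p : α} {cs : List (RTree (α ⊕ Rule α))}
      (hp : p ∈ X) (hne : cs ≠ [])
      (hcomplete : ∀ r ∈ P, Supports X (insert p Z) r p →
        ∃ c ∈ cs, RTree.label c = Sum.inr r)
      (hsound : ∀ c ∈ cs,
        ∃ r ∈ P, Supports X (insert p Z) r p ∧ RTree.label c = Sum.inr r)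
      (hrec : ∀ c ∈ cs, IsAOTNode P X (insert p Z) c) :
      IsAOTNode P X Z (.node (.inl p) cs)
  | rule {Z : Set α} {r : Rule α} {cs : List (RTree (α ⊕ Rule α))}
      (hcomplete : ∀ a ∈ r.pos, ∃ c ∈ cs, RTree.label c = Sum.inl a)
      (hsound : ∀ c ∈ cs, ∃ a ∈ r.pos, RTree.label c = Sum.inl a)
      (hrec : ∀ c ∈ cs, IsAOTNode P X Z c) :
      IsAOTNode P X Z (.node (.inr r) cs)

open Classical in
/-- The difference weight `W_{T,R}` relative to a set `R` of rule (and-) vertices: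
an atom (or-) vertex gets the maximum of its children's weights; a rule (and-)
vertex gets the sum of its children's weights, plus 1 if it does not belong to
`R` and plus 0 if it does. -/
noncomputable def wdiff {α ρ : Type} (R : Set (RTree (α ⊕ ρ))) : RTree (α ⊕ ρ) → ℕ
  | .node (.inl _) cs => ((cs.attach.map (fun c => wdiff R c.1)).foldr max 0)
  | .node (.inr r) cs => (cs.attach.map (fun c => wdiff R c.1)).sum +
      (if RTree.node (.inr r) cs ∈ R then 0 else 1)
decreasing_by
  all_goals (have := List.sizeOf_lt_of_mem c.2; simp only [RTree.node.sizeOf_spec]; omega)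

/-- `Sel T V`: `V` is the set of rule (and-) vertices of some explanation tree
(solution subtree) of the and-or tree `T`: at each atom (or-) vertex one child is
chosen, at each rule vertex all children are kept, and `V` collects the rule
vertices (as vertices of `T`) that are visited. -/
inductive Sel {α ρ : Type} : RTree (α ⊕ ρ) → Set (RTree (α ⊕ ρ)) → Prop
  | atom {a : α} {cs : List (RTree (α ⊕ ρ))} {c : RTree (α ⊕ ρ)} {V : Set (RTree (α ⊕ ρ))} :
      c ∈ cs → Sel c V → Sel (.node (.inl a) cs) V
  | rule {r : ρ} {cs : List (RTree (α ⊕ ρ))} (f : RTree (α ⊕ ρ) → Set (RTree (α ⊕ ρ)))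
      (h : ∀ c ∈ cs, Sel c (f c)) :
      Sel (.node (.inr r) cs) (insert (.node (.inr r) cs) (⋃ c ∈ cs, f c))

/-- `MaxSel R T V`: `V` is the set of rule vertices of the explanation tree
extracted by selecting, at each atom (or-) vertex, a child of maximum
`wdiff R`-weight, and at each rule vertex all children. -/
inductive MaxSel {α ρ : Type} (R : Set (RTree (α ⊕ ρ))) :
    RTree (α ⊕ ρ) → Set (RTree (α ⊕ ρ)) → Prop
  | atom {a : α} {cs : List (RTree (α ⊕ ρ))} {c : RTree (α ⊕ ρ)} {V : Set (RTree (α ⊕ ρ))} :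
      c ∈ cs → (∀ c' ∈ cs, wdiff R c' ≤ wdiff R c) → MaxSel R c V →
      MaxSel R (.node (.inl a) cs) V
  | rule {r : ρ} {cs : List (RTree (α ⊕ ρ))} (f : RTree (α ⊕ ρ) → Set (RTree (α ⊕ ρ)))
      (h : ∀ c ∈ cs, MaxSel R c (f c)) :
      MaxSel R (.node (.inr r) cs) (insert (.node (.inr r) cs) (⋃ c ∈ cs, f c))

/-!
Every explanation tree `V` satisfies `|V \ R| ≤ W_{T,R}(T)`: at an atom vertex one child is
kept, whose weight is at most the maximum, and at a rule vertex `V` is the vertex itself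
together with the explanation trees of the children, and cardinality is subadditive. When the
vertices of `T` are pairwise distinct, the subtrees below distinct children share no vertex,
subadditivity becomes additivity, and the tree picking children of maximal weight attains
`W_{T,R}(T)` exactly.
-/

namespace RTree

variable {L : Type}

@[simp]
theorem occs_node (l : L) (cs : List (RTree L)) :
    (node l cs).occs = node l cs :: (cs.map occs).flatten := by
  rw [occs]; simp

theorem mem_occs_self (t : RTree L) : t ∈ t.occs := by
  cases t; simp

theorem mem_occs_node_of_mem_occs {l : L} {cs : List (RTree L)} {c v : RTree L}
    (hc : c ∈ cs) (hv : v ∈ c.occs) : v ∈ (node l cs).occs := by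
  simp only [occs_node, List.mem_cons, List.mem_flatten, List.mem_map]
  exact Or.inr ⟨c.occs, ⟨c, hc, rfl⟩, hv⟩

end RTree

namespace Set

variable {β γ : Type}

theorem ncard_biUnion_list_le (l : List β) (s : β → Set γ) :
    (⋃ b ∈ l, s b).ncard ≤ (l.map fun b => (s b).ncard).sum := by
  induction l with
  | nil => simp
  | cons a l ih =>
    simp only [List.mem_cons, iUnion_iUnion_eq_or_left, List.map_cons, List.sum_cons]
    exact (ncard_union_le _ _).trans (Nat.add_le_add_left ih _)

theorem ncard_biUnion_list_of_pairwise_disjoint (l : List β) (s : β → Set γ)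
    (hfin : ∀ b ∈ l, (s b).Finite) (hdisj : l.Pairwise fun a b => Disjoint (s a) (s b)) :
    (⋃ b ∈ l, s b).ncard = (l.map fun b => (s b).ncard).sum := by
  induction l with
  | nil => simp
  | cons a l ih =>
    obtain ⟨hdisj_a, hdisj_l⟩ := List.pairwise_cons.1 hdisj
    simp only [List.mem_cons, forall_eq_or_imp] at hfin
    simp only [List.mem_cons, iUnion_iUnion_eq_or_left, List.map_cons, List.sum_cons]
    rw [ncard_union_eq (disjoint_iUnion₂_right.2 hdisj_a) hfin.1 (l.finite_toSet.biUnion hfin.2),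
      ih hfin.2 hdisj_l]

end Set

section Weight

variable {α ρ : Type} (R : Set (RTree (α ⊕ ρ)))

theorem wdiff_atom (a : α) (cs : List (RTree (α ⊕ ρ))) :
    wdiff R (.node (.inl a) cs) = (cs.map (wdiff R)).foldr max 0 := by
  rw [wdiff]; simp

theorem wdiff_rule_of_mem {r : ρ} {cs : List (RTree (α ⊕ ρ))} (h : .node (.inr r) cs ∈ R) :
    wdiff R (.node (.inr r) cs) = (cs.map (wdiff R)).sum := by
  rw [wdiff]; simp [h]

theorem wdiff_rule_of_notMem {r : ρ} {cs : List (RTree (α ⊕ ρ))}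
    (h : .node (.inr r) cs ∉ R) :
    wdiff R (.node (.inr r) cs) = (cs.map (wdiff R)).sum + 1 := by
  rw [wdiff]; simp [h]

theorem wdiff_le_wdiff_atom {a : α} {cs : List (RTree (α ⊕ ρ))} {c : RTree (α ⊕ ρ)}
    (hc : c ∈ cs) : wdiff R c ≤ wdiff R (.node (.inl a) cs) := by
  rw [wdiff_atom]
  exact List.le_max_of_le' 0 (List.mem_map_of_mem hc) le_rfl

theorem wdiff_atom_of_forall_le {a : α} {cs : List (RTree (α ⊕ ρ))} {c : RTree (α ⊕ ρ)}
    (hc : c ∈ cs) (hmax : ∀ c' ∈ cs, wdiff R c' ≤ wdiff R c) :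
    wdiff R (.node (.inl a) cs) = wdiff R c := by
  refine le_antisymm ?_ (wdiff_le_wdiff_atom R hc)
  rw [wdiff_atom]
  exact List.max_le_of_forall_le _ _ (by simpa using hmax)

end Weight

variable {α ρ : Type} {R V : Set (RTree (α ⊕ ρ))} {t : RTree (α ⊕ ρ)}

namespace Sel

theorem subset_occs (h : Sel t V) : V ⊆ {v | v ∈ t.occs} := by
  induction h with
  | atom hc _ ih => exact fun v hv => RTree.mem_occs_node_of_mem_occs hc (ih hv)
  | rule f _ ih =>
    rintro v (rfl | hv)
    · exact RTree.mem_occs_self _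
    · obtain ⟨c, hc, hvc⟩ := Set.mem_iUnion₂.1 hv
      exact RTree.mem_occs_node_of_mem_occs hc (ih c hc hvc)

theorem finite (h : Sel t V) : V.Finite :=
  t.occs.finite_toSet.subset h.subset_occs

theorem ncard_sdiff_le_wdiff (R : Set (RTree (α ⊕ ρ))) (h : Sel t V) :
    (V \ R).ncard ≤ wdiff R t := by
  induction h with
  | atom hc _ ih => exact ih.trans (wdiff_le_wdiff_atom R hc)
  | @rule r cs f _ ih =>
    have hunion : ((⋃ c ∈ cs, f c) \ R).ncard ≤ (cs.map (wdiff R)).sum := calc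
      _ = (⋃ c ∈ cs, f c \ R).ncard := by simp only [Set.iUnion_sdiff]
      _ ≤ (cs.map fun c => (f c \ R).ncard).sum := Set.ncard_biUnion_list_le _ _
      _ ≤ _ := List.sum_le_sum ih
    by_cases hx : .node (.inr r) cs ∈ R
    · rwa [wdiff_rule_of_mem R hx, Set.insert_sdiff_of_mem _ hx]
    · rw [wdiff_rule_of_notMem R hx, Set.insert_sdiff_of_notMem _ hx]
      exact (Set.ncard_insert_le _ _).trans (Nat.add_le_add_right hunion 1)

end Sel

namespace MaxSel

theorem sel (h : MaxSel R t V) : Sel t V := by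
  induction h with
  | atom hc _ _ ih => exact .atom hc ih
  | rule f _ ih => exact .rule f ih

theorem ncard_sdiff_eq_wdiff (h : MaxSel R t V) (hnd : t.occs.Nodup) :
    (V \ R).ncard = wdiff R t := by
  induction h with
  | atom hc hmax _ ih =>
    rw [RTree.occs_node, List.nodup_cons, List.nodup_flatten] at hnd
    rw [wdiff_atom_of_forall_le R hc hmax, ih (hnd.2.1 _ (List.mem_map_of_mem hc))]
  | @rule r cs f hf ih =>
    rw [RTree.occs_node, List.nodup_cons, List.nodup_flatten, List.pairwise_map] at hnd
    obtain ⟨hroot, hchildren, hdisj⟩ := hnd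
    have hsel (c) (hc : c ∈ cs) : Sel c (f c) := (hf c hc).sel
    have hroot_notMem : .node (.inr r) cs ∉ (⋃ c ∈ cs, f c) \ R := by
      simp only [Set.mem_sdiff, Set.mem_iUnion]
      rintro ⟨⟨c, hc, hxc⟩, -⟩
      exact hroot
        (List.mem_flatten.2 ⟨c.occs, List.mem_map_of_mem hc, (hsel c hc).subset_occs hxc⟩)
    have hunion : ((⋃ c ∈ cs, f c) \ R).ncard = (cs.map (wdiff R)).sum := by
      simp only [Set.iUnion_sdiff]
      rw [Set.ncard_biUnion_list_of_pairwise_disjoint _ _ (fun c hc => (hsel c hc).finite.sdiff)]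
      · exact congrArg List.sum (List.map_congr_left
          fun c hc => ih c hc (hchildren _ (List.mem_map_of_mem hc)))
      · refine hdisj.imp_of_mem fun hc hc' hcc' => Set.disjoint_left.2 fun v hv hv' => ?_
        exact hcc' ((hsel _ hc).subset_occs hv.1) ((hsel _ hc').subset_occs hv'.1)
    by_cases hx : .node (.inr r) cs ∈ R
    · rw [wdiff_rule_of_mem R hx, Set.insert_sdiff_of_mem _ hx, hunion]
    · rw [wdiff_rule_of_notMem R hx, Set.insert_sdiff_of_notMem _ hx,
        Set.ncard_insert_of_notMem hroot_notMem
          (cs.finite_toSet.biUnion fun c hc => (hsel c hc).finite).sdiff, hunion]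

end MaxSel

theorem maxSel_maximizes_distance_general {α : Type}
    (T : RTree (α ⊕ Rule α)) (hnd : (RTree.occs T).Nodup)
    (R V : Set (RTree (α ⊕ Rule α))) (hV : MaxSel R T V) :
    Sel T V ∧ ∀ V', Sel T V' → (V' \ R).ncard ≤ (V \ R).ncard :=
  ⟨hV.sel, fun _ hV' => hV.ncard_sdiff_eq_wdiff hnd ▸ hV'.ncard_sdiff_le_wdiff R⟩

/-- Greedy diversity is optimal stepwise: in the and-or explanation tree `T` for
`p` w.r.t. `Π` and `X` (with pairwise distinct vertices), for any set `R` of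
previously collected rule vertices, the explanation extracted by selecting at
each atom vertex a child of maximum `W_{T,R}`-weight achieves the maximum
possible distance `Δ_D(R, ·) = |RVertices(·) \ R|` among all explanation trees
in `T`. -/
theorem maxSel_maximizes_distance {α : Type} (P : Set (Rule α)) (X : Set α) (p : α)
    (T : RTree (α ⊕ Rule α)) (hT : IsAOTNode P X ∅ T)
    (hroot : RTree.label T = Sum.inl p) (hnd : (RTree.occs T).Nodup)
    (R V : Set (RTree (α ⊕ Rule α))) (hV : MaxSel R T V) :
    Sel T V ∧ ∀ V', Sel T V' → (V' \ R).ncard ≤ (V \ R).ncard :=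
  maxSel_maximizes_distance_general T hnd R V hV
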